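/- Asymptotics for a hyperbolic Hamiltonian Jordan block: let λ ∈ ℂ with Re(λ) > 0, let 𝔍 = N_n(λ) ⊕ (−N_n(λ)^H) ∈ ℂ^{2n×2n}, let S = [[U₁, V₁],[U₂, V₂]] be symplectic with S^{-1} H S = 𝔍 for a Hamiltonian H, let W₀ be Hermitian and write [W₁; W₂] = S^{-1}[I; W₀]. Define [Q(t); P(t)] = exp(tH)[I; W₀]. If U₁ and W₁ are invertible, then as t → +∞: Q(t)^{-1} = O(e^{−Re(λ)t} t^{n−1}), and W(t) := P(t)Q(t)^{-1} satisfies W(t) = U₂U₁^{-1} + O(e^{−2Re(λ)t} t^{2(n−1)}); moreover U₂U₁^{-1} is Hermitian. -/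

import Mathlib

open Matrix Filter Asymptotics

attribute [local instance] Matrix.normedAddCommGroup

/-- The `n×n` nilpotent Jordan block over `ℂ`. -/
def NmatC (n : ℕ) : Matrix (Fin n) (Fin n) ℂ :=
  Matrix.of fun i j => if (i : ℕ) + 1 = (j : ℕ) then 1 else 0

/-- The matrix `J = [[0, Iₙ], [−Iₙ, 0]]`. -/
def Jmat (n : ℕ) : Matrix (Fin n ⊕ Fin n) (Fin n ⊕ Fin n) ℂ :=
  Matrix.fromBlocks 0 1 (-1) 0

/-!
Conjugating by `S` gives `exp (t H) = S (exp (t A) ⊕ exp (-t Aᴴ)) S⁻¹` with `A = λ I + N`, hence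
`Q = U₁ exp (t A) W₁ + V₁ exp (-t Aᴴ) W₂` and `P = U₂ exp (t A) W₁ + V₂ exp (-t Aᴴ) W₂`.
As `N` is nilpotent of index `n`, both `exp (-t A) = exp (t A)⁻¹` and `exp (-t Aᴴ)` are
`O(g)` with `g t = e^{-Re λ t} t^{n-1}`. Factoring out the invertible leading term
`U₁ exp (t A) W₁`, whose inverse is `O(g)`, leaves `1 + O(g²)`, so `Q⁻¹ = O(g)`. Moreover
`P - U₂ U₁⁻¹ Q = (V₂ - U₂ U₁⁻¹ V₁) exp (-t Aᴴ) W₂ = O(g)`, and multiplying by `Q⁻¹` gives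
`P Q⁻¹ - U₂ U₁⁻¹ = O(g²)`. Hermiticity of `U₂ U₁⁻¹` is the upper left block of `Sᴴ J S = J`.
-/

attribute [local instance] Matrix.normedSpace

open NormedSpace Topology

theorem Asymptotics.isBigO_pow_pow_atTop_of_le {i k : ℕ} (h : i ≤ k) :
    (fun t : ℝ => t ^ i) =O[atTop] fun t => t ^ k := by
  refine IsBigO.of_bound 1 ?_
  filter_upwards [eventually_ge_atTop 1] with t ht
  have ht0 : 0 ≤ t := zero_le_one.trans ht
  rw [Real.norm_of_nonneg (pow_nonneg ht0 _), Real.norm_of_nonneg (pow_nonneg ht0 _), one_mul]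
  exact pow_le_pow_right₀ ht h

theorem Real.tendsto_exp_neg_mul_mul_pow_atTop_nhds_zero {b : ℝ} (hb : 0 < b) (k : ℕ) :
    Tendsto (fun t => Real.exp (-b * t) * t ^ k) atTop (𝓝 0) := by
  simpa [Real.rpow_natCast, mul_comm] using tendsto_rpow_mul_exp_neg_mul_atTop_nhds_zero k b hb

theorem Real.exp_neg_mul_mul_pow_mul_self (b t : ℝ) (k : ℕ) :
    Real.exp (-b * t) * t ^ k * (Real.exp (-b * t) * t ^ k) =
      Real.exp (-(2 * b) * t) * t ^ (2 * k) := by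
  rw [mul_mul_mul_comm, ← Real.exp_add, ← pow_add]
  ring_nf

theorem NormedSpace.exp_eq_sum_of_pow_eq_zero {𝔸 : Type*} [Ring 𝔸] [Algebra ℚ 𝔸]
    [TopologicalSpace 𝔸] [IsTopologicalRing 𝔸] {N : 𝔸} {k : ℕ} (hN : N ^ k = 0) :
    exp N = ∑ i ∈ Finset.range k, (i.factorial⁻¹ : ℚ) • N ^ i := by
  rw [exp_eq_tsum_rat]
  exact tsum_eq_sum fun i hi => by
    rw [pow_eq_zero_of_le (by simpa using hi) hN, smul_zero]

namespace Matrix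

variable {𝕜 : Type*} [RCLike 𝕜] {l m n : Type*} [Fintype l] [Fintype m] [Fintype n]

theorem isBoundedBilinearMap_mul :
    IsBoundedBilinearMap 𝕜 fun p : Matrix l m 𝕜 × Matrix m n 𝕜 => p.1 * p.2 :=
  let μ : Matrix l m 𝕜 →L[𝕜] Matrix m n 𝕜 →L[𝕜] Matrix l n 𝕜 :=
    LinearMap.toContinuousLinearMap (LinearMap.toContinuousLinearMap.toLinearMap ∘ₗ mulLinearMap 𝕜)
  μ.isBoundedBilinearMap

end Matrix

namespace Asymptotics.IsBigO

variable {𝕜 : Type*} [RCLike 𝕜] {l m n o : Type*} [Fintype l] [Fintype m] [Fintype n]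
  [Fintype o] {α : Type*} {L : Filter α}

theorem matrix_mul {f : α → Matrix l m 𝕜} {g : α → Matrix m n 𝕜} {p q : α → ℝ}
    (hf : f =O[L] p) (hg : g =O[L] q) : (fun t => f t * g t) =O[L] fun t => p t * q t :=
  Matrix.isBoundedBilinearMap_mul.isBigO_comp.trans (hf.norm_left.mul hg.norm_left)

theorem matrix_const_mul_mul_const {f : α → Matrix m n 𝕜} {p : α → ℝ} (hf : f =O[L] p)
    (A : Matrix l m 𝕜) (B : Matrix n o 𝕜) : (fun t => A * f t * B) =O[L] p := by
  simpa using ((isBigO_const_one ℝ A L).matrix_mul hf).matrix_mul (isBigO_const_one ℝ B L)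

end Asymptotics.IsBigO

namespace Matrix

variable {𝕜 : Type*} [RCLike 𝕜] {m n : Type*} [Fintype m] [DecidableEq m] [Fintype n]
  [DecidableEq n]

theorem exp_fromBlocks_zero₁₂_zero₂₁ (A : Matrix m m 𝕜) (B : Matrix n n 𝕜) :
    exp (fromBlocks A 0 0 B) = fromBlocks (exp A) 0 0 (exp B) := by
  -- `map_exp` needs Banach algebras; the `L∞` operator norm is one inducing the usual topology.
  let Rm : NormedRing (Matrix m m 𝕜) := Matrix.linftyOpNormedRing
  let Rn : NormedRing (Matrix n n 𝕜) := Matrix.linftyOpNormedRing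
  let : NormedRing (Matrix (m ⊕ n) (m ⊕ n) 𝕜) := Matrix.linftyOpNormedRing
  let : NormedAlgebra 𝕜 (Matrix m m 𝕜) := Matrix.linftyOpNormedAlgebra
  let : NormedAlgebra 𝕜 (Matrix n n 𝕜) := Matrix.linftyOpNormedAlgebra
  let : NormedAlgebra 𝕜 (Matrix (m ⊕ n) (m ⊕ n) 𝕜) := Matrix.linftyOpNormedAlgebra
  let : NormedAlgebra ℚ (Matrix m m 𝕜) := .restrictScalars ℚ 𝕜 _
  let : NormedAlgebra ℚ (Matrix n n 𝕜) := .restrictScalars ℚ 𝕜 _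
  have : @CompleteSpace _ Rm.toUniformSpace := FiniteDimensional.complete 𝕜 _
  have : @CompleteSpace _ Rn.toUniformSpace := FiniteDimensional.complete 𝕜 _
  let f : Matrix m m 𝕜 × Matrix n n 𝕜 →+* Matrix (m ⊕ n) (m ⊕ n) 𝕜 :=
    { toFun := fun p => fromBlocks p.1 0 0 p.2
      map_one' := fromBlocks_one
      map_mul' := fun p q => by simp [fromBlocks_multiply]
      map_zero' := fromBlocks_zero
      map_add' := fun p q => by simp [fromBlocks_add] }
  have := map_exp f (continuous_fst.matrix_fromBlocks continuous_const continuous_const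
    continuous_snd) (A, B)
  simp only [f, RingHom.coe_mk, MonoidHom.coe_mk, OneHom.coe_mk, Prod.fst_exp, Prod.snd_exp] at this
  exact this.symm

theorem isBigO_exp_smul_of_pow_eq_zero {N : Matrix m m 𝕜} {k : ℕ} (hN : N ^ k = 0) :
    (fun t : ℝ => exp ((t : 𝕜) • N)) =O[atTop] fun t => t ^ (k - 1) := by
  have hexp (t : ℝ) : exp ((t : 𝕜) • N) =
      ∑ i ∈ Finset.range k, (i.factorial⁻¹ : ℚ) • ((t : 𝕜) ^ i • N ^ i) := by
    simp_rw [← smul_pow]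
    exact exp_eq_sum_of_pow_eq_zero (by rw [smul_pow, hN, smul_zero])
  simp_rw [hexp]
  refine IsBigO.fun_sum fun i hi => ?_
  have hti : (fun t : ℝ => (t : 𝕜) ^ i) =O[atTop] fun t => t ^ i :=
    isBigO_of_le atTop fun t => by simp
  have hterm := (hti.smul (isBigO_const_one ℝ (N ^ i) atTop)).const_smul_left
    (i.factorial⁻¹ : ℚ)
  simp only [smul_eq_mul, mul_one] at hterm
  exact hterm.trans (isBigO_pow_pow_atTop_of_le (Nat.le_sub_one_of_lt (Finset.mem_range.mp hi)))

theorem exp_smul_one_add (c : ℂ) (M : Matrix m m ℂ) :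
    exp (c • 1 + M) = Complex.exp c • exp M := by
  rw [exp_add_of_commute _ _ ((Commute.one_left M).smul_left c), smul_one_eq_diagonal,
    exp_diagonal, Pi.exp_def, ← Complex.exp_eq_exp_ℂ, ← smul_one_eq_diagonal, smul_one_mul]

theorem isBigO_exp_smul_smul_one_add {N : Matrix m m ℂ} {k : ℕ} (hN : N ^ k = 0) (lam : ℂ) :
    (fun t : ℝ => exp ((t : ℂ) • (lam • 1 + N))) =O[atTop]
      fun t => Real.exp (lam.re * t) * t ^ (k - 1) := by
  simp_rw [smul_add, smul_smul, exp_smul_one_add]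
  have hscalar : (fun t : ℝ => Complex.exp (t * lam)) =O[atTop] fun t => Real.exp (lam.re * t) :=
    isBigO_of_le atTop fun t => by simp [Complex.norm_exp, mul_comm]
  exact hscalar.smul (isBigO_exp_smul_of_pow_eq_zero hN)

theorem isBigO_exp_ofReal_smul_conjTranspose {M : Matrix m m 𝕜} {g : ℝ → ℝ} {L : Filter ℝ}
    (h : (fun t : ℝ => exp ((t : 𝕜) • M)) =O[L] g) :
    (fun t : ℝ => exp ((t : 𝕜) • Mᴴ)) =O[L] g := by
  refine (h.norm_left.congr_left fun t => ?_).of_norm_left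
  rw [← norm_conjTranspose, ← exp_conjTranspose, conjTranspose_smul, RCLike.star_def,
    RCLike.conj_ofReal]

theorem exp_smul_eq_of_inv_mul_mul_eq {H S J : Matrix m m 𝕜} (hS : IsUnit S.det)
    (hJ : S⁻¹ * H * S = J) (z : 𝕜) : exp (z • H) = S * exp (z • J) * S⁻¹ := by
  have hH : H = S * J * S⁻¹ := by
    rw [← hJ, ← Matrix.mul_assoc, ← Matrix.mul_assoc, mul_nonsing_inv _ hS, Matrix.one_mul,
      Matrix.mul_assoc, mul_nonsing_inv _ hS, Matrix.mul_one]
  rw [← exp_conj _ _ ((isUnit_iff_isUnit_det S).mpr hS), hH, mul_smul_comm, smul_mul_assoc]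

theorem exp_smul_mul_eq_fromRows {o : Type*} [Fintype o] {H : Matrix (m ⊕ n) (m ⊕ n) 𝕜}
    {U₁ : Matrix m m 𝕜} {V₁ : Matrix m n 𝕜} {U₂ : Matrix n m 𝕜} {V₂ : Matrix n n 𝕜}
    {A : Matrix m m 𝕜} {B : Matrix n n 𝕜} {X : Matrix (m ⊕ n) o 𝕜} {W₁ : Matrix m o 𝕜}
    {W₂ : Matrix n o 𝕜} (hS : IsUnit (fromBlocks U₁ V₁ U₂ V₂).det)
    (hconj : (fromBlocks U₁ V₁ U₂ V₂)⁻¹ * H * fromBlocks U₁ V₁ U₂ V₂ = fromBlocks A 0 0 B)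
    (hW : fromRows W₁ W₂ = (fromBlocks U₁ V₁ U₂ V₂)⁻¹ * X) (z : 𝕜) :
    exp (z • H) * X = fromRows (U₁ * exp (z • A) * W₁ + V₁ * exp (z • B) * W₂)
      (U₂ * exp (z • A) * W₁ + V₂ * exp (z • B) * W₂) := by
  rw [exp_smul_eq_of_inv_mul_mul_eq hS hconj, fromBlocks_smul, smul_zero, smul_zero,
    exp_fromBlocks_zero₁₂_zero₂₁, Matrix.mul_assoc, Matrix.mul_assoc, ← hW, ← Matrix.mul_assoc,
    fromBlocks_multiply, fromBlocks_mul_fromRows]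
  simp [Matrix.mul_assoc]

theorem isHermitian_mul_inv_of_conjTranspose_mul_eq {U₁ U₂ : Matrix m m 𝕜}
    (h : U₁ᴴ * U₂ = U₂ᴴ * U₁) (hU₁ : IsUnit U₁.det) : (U₂ * U₁⁻¹).IsHermitian := by
  have hU₂ : U₂ᴴ = U₁ᴴ * (U₂ * U₁⁻¹) := by
    rw [← Matrix.mul_assoc, h, Matrix.mul_assoc, mul_nonsing_inv _ hU₁, mul_one]
  have hU₁star : IsUnit U₁ᴴ.det := by simpa [det_conjTranspose] using hU₁.star
  rw [IsHermitian, conjTranspose_mul, conjTranspose_nonsing_inv, hU₂,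
    nonsing_inv_mul_cancel_left _ _ hU₁star]

end Matrix

namespace Matrix

variable {𝕜 : Type*} [RCLike 𝕜] {m : Type*} [Fintype m] [DecidableEq m] {α : Type*}
  {L : Filter α}

theorem eventually_isUnit_det_of_tendsto_one {M : α → Matrix m m 𝕜} (h : Tendsto M L (𝓝 1)) :
    ∀ᶠ t in L, IsUnit (M t).det := by
  have hdet : Tendsto (fun t => (M t).det) L (𝓝 1) :=
    (continuous_id.matrix_det.tendsto' 1 1 det_one).comp h
  exact (hdet.eventually_ne one_ne_zero).mono fun t ht => ht.isUnit

theorem tendsto_inv_of_tendsto_one {M : α → Matrix m m 𝕜} (h : Tendsto M L (𝓝 1)) :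
    Tendsto (fun t => (M t)⁻¹) L (𝓝 1) := by
  have hinv : ContinuousAt Inv.inv (1 : Matrix m m 𝕜) := continuousAt_matrix_inv 1 <| by
    simpa only [det_one, Ring.inverse_eq_inv'] using continuousAt_inv₀ (one_ne_zero (α := 𝕜))
  have := hinv.tendsto.comp h
  rwa [inv_one] at this

variable {X Y : α → Matrix m m 𝕜} {g : α → ℝ}

theorem tendsto_one_add_inv_mul (hXinv : (fun t => (X t)⁻¹) =O[L] g) (hY : Y =O[L] g)
    (hg : Tendsto g L (𝓝 0)) : Tendsto (fun t => 1 + (X t)⁻¹ * Y t) L (𝓝 1) := by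
  have h : Tendsto (fun t => (X t)⁻¹ * Y t) L (𝓝 0) :=
    (hXinv.matrix_mul hY).trans_tendsto (by simpa using hg.mul hg)
  simpa using tendsto_const_nhds.add h

theorem add_eq_mul_one_add_inv_mul {A B : Matrix m m 𝕜} (hA : IsUnit A.det) :
    A + B = A * (1 + A⁻¹ * B) := by
  rw [mul_add, mul_one, mul_nonsing_inv_cancel_left _ _ hA]

theorem eventually_isUnit_det_add (hX : ∀ᶠ t in L, IsUnit (X t).det)
    (hXinv : (fun t => (X t)⁻¹) =O[L] g) (hY : Y =O[L] g) (hg : Tendsto g L (𝓝 0)) :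
    ∀ᶠ t in L, IsUnit (X t + Y t).det := by
  filter_upwards [hX, eventually_isUnit_det_of_tendsto_one (tendsto_one_add_inv_mul hXinv hY hg)]
    with t hXt hZt
  rw [add_eq_mul_one_add_inv_mul hXt, det_mul]
  exact hXt.mul hZt

theorem isBigO_inv_add (hX : ∀ᶠ t in L, IsUnit (X t).det)
    (hXinv : (fun t => (X t)⁻¹) =O[L] g) (hY : Y =O[L] g) (hg : Tendsto g L (𝓝 0)) :
    (fun t => (X t + Y t)⁻¹) =O[L] g := by
  have hbdd : (fun t => (1 + (X t)⁻¹ * Y t)⁻¹) =O[L] fun _ => (1 : ℝ) :=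
    (tendsto_inv_of_tendsto_one (tendsto_one_add_inv_mul hXinv hY hg)).isBigO_one ℝ
  refine (hbdd.matrix_mul hXinv).congr' ?_ (by simp)
  filter_upwards [hX] with t hXt
  rw [add_eq_mul_one_add_inv_mul hXt, mul_inv_rev]

theorem isBigO_mul_inv_sub {P Q : α → Matrix m m 𝕜} (R : Matrix m m 𝕜)
    (hQ : ∀ᶠ t in L, IsUnit (Q t).det) (hQinv : (fun t => (Q t)⁻¹) =O[L] g)
    (hPQ : (fun t => P t - R * Q t) =O[L] g) :
    (fun t => P t * (Q t)⁻¹ - R) =O[L] fun t => g t * g t := by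
  refine (hPQ.matrix_mul hQinv).congr' ?_ EventuallyEq.rfl
  filter_upwards [hQ] with t hQt
  rw [sub_mul, Matrix.mul_assoc, mul_nonsing_inv _ hQt, mul_one]

variable {E₁ E₂ : α → Matrix m m 𝕜} {U₁ W₁ : Matrix m m 𝕜}

theorem isBigO_inv_mul_mul (hE₁inv : (fun t => (E₁ t)⁻¹) =O[L] g) :
    (fun t => (U₁ * E₁ t * W₁)⁻¹) =O[L] g := by
  simpa only [Matrix.mul_inv_rev, Matrix.mul_assoc] using
    hE₁inv.matrix_const_mul_mul_const W₁⁻¹ U₁⁻¹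

theorem eventually_isUnit_det_mul_mul (hU₁ : IsUnit U₁.det) (hW₁ : IsUnit W₁.det)
    (hE₁ : ∀ᶠ t in L, IsUnit (E₁ t).det) : ∀ᶠ t in L, IsUnit (U₁ * E₁ t * W₁).det :=
  hE₁.mono fun t ht => by
    rw [det_mul, det_mul]
    exact (hU₁.mul ht).mul hW₁

theorem isBigO_inv_mul_mul_add_mul_mul (V₁ W₂ : Matrix m m 𝕜) (hU₁ : IsUnit U₁.det)
    (hW₁ : IsUnit W₁.det) (hE₁ : ∀ᶠ t in L, IsUnit (E₁ t).det)
    (hE₁inv : (fun t => (E₁ t)⁻¹) =O[L] g) (hE₂ : E₂ =O[L] g) (hg : Tendsto g L (𝓝 0)) :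
    (fun t => (U₁ * E₁ t * W₁ + V₁ * E₂ t * W₂)⁻¹) =O[L] g :=
  isBigO_inv_add (eventually_isUnit_det_mul_mul hU₁ hW₁ hE₁) (isBigO_inv_mul_mul hE₁inv)
    (hE₂.matrix_const_mul_mul_const V₁ W₂) hg

theorem isBigO_mul_mul_add_mul_mul_mul_inv_sub (V₁ U₂ V₂ W₂ : Matrix m m 𝕜)
    (hU₁ : IsUnit U₁.det) (hW₁ : IsUnit W₁.det) (hE₁ : ∀ᶠ t in L, IsUnit (E₁ t).det)
    (hE₁inv : (fun t => (E₁ t)⁻¹) =O[L] g) (hE₂ : E₂ =O[L] g) (hg : Tendsto g L (𝓝 0)) :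
    (fun t => (U₂ * E₁ t * W₁ + V₂ * E₂ t * W₂) * (U₁ * E₁ t * W₁ + V₁ * E₂ t * W₂)⁻¹ -
      U₂ * U₁⁻¹) =O[L] fun t => g t * g t := by
  have hX := eventually_isUnit_det_mul_mul hU₁ hW₁ hE₁
  have hY := hE₂.matrix_const_mul_mul_const V₁ W₂
  refine isBigO_mul_inv_sub _ (eventually_isUnit_det_add hX (isBigO_inv_mul_mul hE₁inv) hY hg)
    (isBigO_inv_mul_mul_add_mul_mul V₁ W₂ hU₁ hW₁ hE₁ hE₁inv hE₂ hg) ?_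
  -- the growing modes cancel: `U₂ U₁⁻¹ (U₁ E₁ W₁) = U₂ E₁ W₁`
  refine (hE₂.matrix_const_mul_mul_const (V₂ - U₂ * U₁⁻¹ * V₁) W₂).congr_left fun t => ?_
  simp only [mul_add, sub_mul, ← Matrix.mul_assoc, nonsing_inv_mul_cancel_right _ _ hU₁]
  abel

end Matrix

theorem NmatC_pow_apply (n k : ℕ) (i j : Fin n) :
    (NmatC n ^ k) i j = if (i : ℕ) + k = j then 1 else 0 := by
  induction k generalizing j with
  | zero => simp [one_apply, Fin.ext_iff]
  | succ k ih =>
    simp_rw [pow_succ, mul_apply, ih, NmatC, of_apply, ite_mul, one_mul, zero_mul]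
    by_cases h : (i : ℕ) + k < n
    · rw [Fintype.sum_eq_single ⟨(i : ℕ) + k, h⟩ fun l hl => if_neg fun h' => hl (Fin.ext h'.symm)]
      simp [Nat.add_assoc]
    · rw [if_neg (by omega)]
      exact Finset.sum_eq_zero fun l _ => if_neg (by omega)

theorem NmatC_pow_self (n : ℕ) : NmatC n ^ n = 0 := by
  ext i j
  rw [NmatC_pow_apply, if_neg (by omega), Matrix.zero_apply]

theorem isBigO_exp_smul_neg_smul_one_add_NmatC (n : ℕ) (lam : ℂ) :
    (fun t : ℝ => exp ((t : ℂ) • -(lam • (1 : Matrix (Fin n) (Fin n) ℂ) + NmatC n))) =O[atTop]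
      fun t => Real.exp (-lam.re * t) * t ^ (n - 1) := by
  have hN : (-NmatC n) ^ n = 0 := by rw [neg_pow, NmatC_pow_self, mul_zero]
  simpa only [neg_add, neg_smul, Complex.neg_re] using
    isBigO_exp_smul_smul_one_add hN (-lam)

theorem Jmat_mul_Jmat (n : ℕ) : Jmat n * Jmat n = -1 := by
  simp [Jmat, fromBlocks_multiply, ← fromBlocks_one, fromBlocks_neg]

section Symplectic

variable {n : ℕ} {S : Matrix (Fin n ⊕ Fin n) (Fin n ⊕ Fin n) ℂ}

theorem mul_Jmat_mul_conjTranspose_mul_Jmat (hS : S * Jmat n * Sᴴ = Jmat n) :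
    S * (Jmat n * Sᴴ * Jmat n) = -1 := by
  rw [← Matrix.mul_assoc, ← Matrix.mul_assoc, hS, Jmat_mul_Jmat]

theorem isUnit_det_of_mul_Jmat_mul_conjTranspose (hS : S * Jmat n * Sᴴ = Jmat n) :
    IsUnit S.det :=
  isUnit_det_of_right_inverse (B := -(Jmat n * Sᴴ * Jmat n)) <| by
    rw [mul_neg, mul_Jmat_mul_conjTranspose_mul_Jmat hS, neg_neg]

theorem conjTranspose_mul_Jmat_mul (hS : S * Jmat n * Sᴴ = Jmat n) :
    Sᴴ * Jmat n * S = Jmat n := by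
  have hleft : Jmat n * Sᴴ * Jmat n * S = -1 := by
    rw [← neg_eq_iff_eq_neg, ← neg_mul, mul_eq_one_comm, mul_neg, neg_eq_iff_eq_neg,
      mul_Jmat_mul_conjTranspose_mul_Jmat hS]
  calc Sᴴ * Jmat n * S = -(Jmat n * Jmat n) * (Sᴴ * Jmat n * S) := by
        rw [Jmat_mul_Jmat, neg_neg, Matrix.one_mul]
    _ = -(Jmat n * (Jmat n * Sᴴ * Jmat n * S)) := by simp only [neg_mul, Matrix.mul_assoc]
    _ = Jmat n := by rw [hleft, mul_neg, Matrix.mul_one, neg_neg]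

theorem conjTranspose_mul_eq_of_symplectic {U₁ V₁ U₂ V₂ : Matrix (Fin n) (Fin n) ℂ}
    (hS : fromBlocks U₁ V₁ U₂ V₂ * Jmat n * (fromBlocks U₁ V₁ U₂ V₂)ᴴ = Jmat n) :
    U₁ᴴ * U₂ = U₂ᴴ * U₁ := by
  have h₁₁ := congrArg toBlocks₁₁ (conjTranspose_mul_Jmat_mul hS)
  simpa [Jmat, fromBlocks_conjTranspose, fromBlocks_multiply, neg_add_eq_sub, sub_eq_zero]
    using h₁₁

end Symplectic

theorem riccati_asymptotics_hyperbolic_block_general {n : ℕ} (lam : ℂ) (hlam : 0 < lam.re)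
    (H S : Matrix (Fin n ⊕ Fin n) (Fin n ⊕ Fin n) ℂ)
    (U₁ V₁ U₂ V₂ : Matrix (Fin n) (Fin n) ℂ)
    (hSblk : S = Matrix.fromBlocks U₁ V₁ U₂ V₂)
    (hSsymp : S * Jmat n * Sᴴ = Jmat n)
    (hconj : S⁻¹ * H * S =
      Matrix.fromBlocks (lam • (1 : Matrix (Fin n) (Fin n) ℂ) + NmatC n) 0 0
        (-(lam • (1 : Matrix (Fin n) (Fin n) ℂ) + NmatC n)ᴴ))
    (W₀ : Matrix (Fin n) (Fin n) ℂ)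
    (W₁ W₂ : Matrix (Fin n) (Fin n) ℂ)
    (hW : Matrix.fromRows W₁ W₂ = S⁻¹ * Matrix.fromRows 1 W₀)
    (Q P : ℝ → Matrix (Fin n) (Fin n) ℂ)
    (hQP : ∀ t : ℝ, Matrix.fromRows (Q t) (P t) =
      NormedSpace.exp ((t : ℂ) • H) * Matrix.fromRows 1 W₀)
    (hU₁ : IsUnit U₁.det) (hW₁ : IsUnit W₁.det) :
    (fun t : ℝ => (Q t)⁻¹) =O[atTop]
      (fun t : ℝ => Real.exp (-lam.re * t) * t ^ (n - 1)) ∧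
    (fun t : ℝ => P t * (Q t)⁻¹ - U₂ * U₁⁻¹) =O[atTop]
      (fun t : ℝ => Real.exp (-(2 * lam.re) * t) * t ^ (2 * (n - 1))) ∧
    (U₂ * U₁⁻¹).IsHermitian := by
  subst hSblk
  set A := lam • (1 : Matrix (Fin n) (Fin n) ℂ) + NmatC n
  have hflow (t : ℝ) := fromRows_inj <| (hQP t).trans <|
    exp_smul_mul_eq_fromRows (isUnit_det_of_mul_Jmat_mul_conjTranspose hSsymp) hconj hW (t : ℂ)
  obtain rfl : Q = fun t : ℝ => U₁ * exp ((t : ℂ) • A) * W₁ + V₁ * exp ((t : ℂ) • -Aᴴ) * W₂ :=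
    funext fun t => (hflow t).1
  obtain rfl : P = fun t : ℝ => U₂ * exp ((t : ℂ) • A) * W₁ + V₂ * exp ((t : ℂ) • -Aᴴ) * W₂ :=
    funext fun t => (hflow t).2
  have hE₁ : ∀ᶠ t : ℝ in atTop, IsUnit (exp ((t : ℂ) • A)).det :=
    Eventually.of_forall fun t => (isUnit_iff_isUnit_det _).mp (isUnit_exp _)
  have hE₁inv : (fun t : ℝ => (exp ((t : ℂ) • A))⁻¹) =O[atTop]
      fun t => Real.exp (-lam.re * t) * t ^ (n - 1) := by
    simpa only [← Matrix.exp_neg, ← smul_neg] using isBigO_exp_smul_neg_smul_one_add_NmatC n lam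
  have hE₂ : (fun t : ℝ => exp ((t : ℂ) • -Aᴴ)) =O[atTop]
      fun t => Real.exp (-lam.re * t) * t ^ (n - 1) := by
    have := isBigO_exp_ofReal_smul_conjTranspose (isBigO_exp_smul_neg_smul_one_add_NmatC n lam)
    rwa [conjTranspose_neg] at this
  have hg := Real.tendsto_exp_neg_mul_mul_pow_atTop_nhds_zero hlam (n - 1)
  refine ⟨isBigO_inv_mul_mul_add_mul_mul V₁ W₂ hU₁ hW₁ hE₁ hE₁inv hE₂ hg, ?_,
    isHermitian_mul_inv_of_conjTranspose_mul_eq (conjTranspose_mul_eq_of_symplectic hSsymp) hU₁⟩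
  simpa only [Real.exp_neg_mul_mul_pow_mul_self] using
    isBigO_mul_mul_add_mul_mul_mul_inv_sub V₁ U₂ V₂ W₂ hU₁ hW₁ hE₁ hE₁inv hE₂ hg

/-- Theorem 4.10 (hyperbolic Hamiltonian Jordan block, `t → +∞` direction): with
`𝔍 = N_n(λ) ⊕ (−N_n(λ)ᴴ)`, `Re λ > 0`, a symplectic `S = [[U₁,V₁],[U₂,V₂]]` such that
`S⁻¹ H S = 𝔍` for a Hamiltonian `H`, `W₀` Hermitian, `[W₁; W₂] = S⁻¹ [I; W₀]` and
`[Q t; P t] = exp(tH) [I; W₀]`: if `U₁` and `W₁` are invertible, then as `t → ∞`,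
`Q(t)⁻¹ = O(e^{−Re(λ)t} t^{n−1})` and
`P(t)Q(t)⁻¹ = U₂U₁⁻¹ + O(e^{−2Re(λ)t} t^{2(n−1)})`, with `U₂U₁⁻¹` Hermitian. -/
theorem riccati_asymptotics_hyperbolic_block {n : ℕ} (lam : ℂ) (hlam : 0 < lam.re)
    (H S : Matrix (Fin n ⊕ Fin n) (Fin n ⊕ Fin n) ℂ)
    (U₁ V₁ U₂ V₂ : Matrix (Fin n) (Fin n) ℂ)
    (hSblk : S = Matrix.fromBlocks U₁ V₁ U₂ V₂)
    (hSsymp : S * Jmat n * Sᴴ = Jmat n)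
    (hHham : H * Jmat n = (H * Jmat n)ᴴ)
    (hconj : S⁻¹ * H * S =
      Matrix.fromBlocks (lam • (1 : Matrix (Fin n) (Fin n) ℂ) + NmatC n) 0 0
        (-(lam • (1 : Matrix (Fin n) (Fin n) ℂ) + NmatC n)ᴴ))
    (W₀ : Matrix (Fin n) (Fin n) ℂ) (hW₀ : W₀.IsHermitian)
    (W₁ W₂ : Matrix (Fin n) (Fin n) ℂ)
    (hW : Matrix.fromRows W₁ W₂ = S⁻¹ * Matrix.fromRows 1 W₀)
    (Q P : ℝ → Matrix (Fin n) (Fin n) ℂ)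
    (hQP : ∀ t : ℝ, Matrix.fromRows (Q t) (P t) =
      NormedSpace.exp ((t : ℂ) • H) * Matrix.fromRows 1 W₀)
    (hU₁ : IsUnit U₁.det) (hW₁ : IsUnit W₁.det) :
    (fun t : ℝ => (Q t)⁻¹) =O[atTop]
      (fun t : ℝ => Real.exp (-lam.re * t) * t ^ (n - 1)) ∧
    (fun t : ℝ => P t * (Q t)⁻¹ - U₂ * U₁⁻¹) =O[atTop]
      (fun t : ℝ => Real.exp (-(2 * lam.re) * t) * t ^ (2 * (n - 1))) ∧
    (U₂ * U₁⁻¹).IsHermitian :=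
  riccati_asymptotics_hyperbolic_block_general lam hlam H S U₁ V₁ U₂ V₂ hSblk hSsymp hconj W₀ W₁ W₂
    hW Q P hQP hU₁ hW₁
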